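/- arXiv:1004.2735 — 3 statements merged into one kernel-verified Lean document; each statement's English description precedes it below -/
import Mathlib

section
/- Let T' be a finite tree with exactly 2n leaves, where n ≥ 1, and let 𝓛 denote its set of leaves. Then there exists a vertex v of T' and a bijection α : 𝓛 → 𝓛 such that the collection of unique paths P_{ℓ, α(ℓ)} for ℓ ∈ 𝓛 covers every vertex of T', and every one of these paths contains v. -/
open SimpleGraph Finset

variable {V : Type*}

/-- In a tree, `x` lies on the unique path between `u` and `v` iff
`dist u x + dist x v = dist u v`. -/
def onTreePath (G : SimpleGraph V) (u x v : V) : Prop :=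
  G.dist u x + G.dist x v = G.dist u v

/-- The set of leaves (vertices of degree 1) of a graph. -/
def leafSet (G : SimpleGraph V) [Fintype V] [DecidableRel G.Adj] : Set V :=
  {v : V | G.degree v = 1}

/-!
Take for `v` a median of the leaves, a vertex minimising the total distance to them. The
leaves then split into branches at `v` (identified by the first step `stepToward v ℓ` of the
path from `v` to `ℓ`), each holding at most half of the leaves, since otherwise moving one step
into the heavy branch would decrease the total distance. Hall's theorem then gives a
permutation `α` of the leaves sending every leaf into a different branch, so that every path
`P_{ℓ, α ℓ}` passes through `v`. Finally every vertex `x` lies on the path from `v` to some leaf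
`m`, and `x` then lies on the path `P_{α⁻¹ m, m}`, which runs through `v`.
-/

theorem Fintype.exists_bijective_forall_ne_of_two_mul_card_fiber_le {ι κ : Type*} [Fintype ι]
    [DecidableEq κ] (f : ι → κ) (hf : ∀ k, 2 * #{i | f i = k} ≤ Fintype.card ι) :
    ∃ α : ι → ι, Function.Bijective α ∧ ∀ i, f (α i) ≠ f i := by
  classical
  suffices hall : ∀ A : Finset ι, #A ≤ #{j | ∃ i ∈ A, f i ≠ f j} by
    obtain ⟨α, hα, hne⟩ := (Fintype.all_card_le_filter_rel_iff_exists_injective _).mp hall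
    exact ⟨α, hα.bijective_of_finite, fun i => (hne i).symm⟩
  intro A
  rcases A.eq_empty_or_nonempty with rfl | ⟨i₀, hi₀⟩
  · simp
  by_cases hsame : ∀ i ∈ A, f i = f i₀
  · have hA : A ⊆ ({i | f i = f i₀} : Finset ι) := fun i hi => by simpa using hsame i hi
    have hcompl : ({j | ¬ f j = f i₀} : Finset ι) ⊆ ({j | ∃ i ∈ A, f i ≠ f j} : Finset ι) :=
      fun j hj => by simpa using ⟨i₀, hi₀, Ne.symm (mem_filter.mp hj).2⟩
    have hsplit := card_filter_add_card_filter_not (s := univ) (fun i => f i = f i₀)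
    rw [card_univ] at hsplit
    have := card_le_card hA
    have := card_le_card hcompl
    have := hf (f i₀)
    omega
  · push Not at hsame
    obtain ⟨i₁, hi₁, hne⟩ := hsame
    calc #A ≤ #(univ : Finset ι) := card_le_univ A
      _ ≤ _ := card_le_card fun j _ => mem_filter.mpr ⟨mem_univ _, by
          by_cases hj : f j = f i₀
          · exact ⟨i₁, hi₁, hj ▸ hne⟩
          · exact ⟨i₀, hi₀, Ne.symm hj⟩⟩

namespace SimpleGraph

variable {G : SimpleGraph V} {u v w x y : V}

lemma Connected.onTreePath_trans_right (hc : G.Connected) {ℓ m : V}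
    (hℓ : onTreePath G ℓ v m) (hx : onTreePath G v x m) : onTreePath G ℓ x m := by
  unfold onTreePath at *
  have := hc.dist_triangle (u := ℓ) (v := v) (w := x)
  have := hc.dist_triangle (u := ℓ) (v := x) (w := m)
  omega

open Classical in
/-- The neighbour of `v` on a shortest path from `v` to `x`; it is `v` itself when `x = v`. -/
noncomputable def stepToward (G : SimpleGraph V) (v x : V) : V :=
  if h : ∃ u, G.Adj v u ∧ G.dist u x + 1 = G.dist v x then h.choose else v

lemma stepToward_self : G.stepToward v v = v := by
  rw [stepToward, dif_neg (by simp)]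

lemma Connected.exists_adj_dist_add_one (hc : G.Connected) (h : v ≠ x) :
    ∃ u, G.Adj v u ∧ G.dist u x + 1 = G.dist v x := by
  obtain ⟨p, hp⟩ := hc.exists_walk_length_eq_dist v x
  cases p with
  | nil => exact absurd rfl h
  | @cons _ u _ hadj q =>
    refine ⟨u, hadj, le_antisymm ?_ ?_⟩
    · rw [← hp, Walk.length_cons]
      exact Nat.succ_le_succ (dist_le q)
    · have := hc.dist_triangle (u := v) (v := u) (w := x)
      rw [dist_eq_one_iff_adj.mpr hadj] at this
      omega

lemma Connected.adj_stepToward (hc : G.Connected) (h : v ≠ x) :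
    G.Adj v (G.stepToward v x) ∧ G.dist (G.stepToward v x) x + 1 = G.dist v x := by
  have hex := hc.exists_adj_dist_add_one h
  rw [stepToward, dif_pos hex]
  exact hex.choose_spec

lemma Connected.stepToward_eq_self_iff (hc : G.Connected) : G.stepToward v x = v ↔ x = v := by
  refine ⟨fun h => ?_, fun h => h ▸ stepToward_self⟩
  by_contra hne
  have := (hc.adj_stepToward (Ne.symm hne)).1
  rw [h] at this
  exact G.irrefl this

lemma IsTree.eq_of_adj_of_dist_add_one (hT : G.IsTree) (hu : G.Adj v u)
    (hux : G.dist u x + 1 = G.dist v x) (hw : G.Adj v w) (hwx : G.dist w x + 1 = G.dist v x) :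
    u = w := by
  obtain ⟨q, hq⟩ := hT.connected.exists_walk_length_eq_dist u x
  obtain ⟨q', hq'⟩ := hT.connected.exists_walk_length_eq_dist w x
  have hp := (Walk.cons hu q).isPath_of_length_eq_dist (by simp [hq, hux])
  have hp' := (Walk.cons hw q').isPath_of_length_eq_dist (by simp [hq', hwx])
  have := (hT.isAcyclic.subsingleton_path v x).elim ⟨_, hp⟩ ⟨_, hp'⟩
  simpa using congrArg (fun p : G.Path v x => (p : G.Walk v x).snd) this

lemma IsTree.stepToward_eq (hT : G.IsTree) (hu : G.Adj v u)
    (hux : G.dist u x + 1 = G.dist v x) : G.stepToward v x = u := by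
  have hvx : v ≠ x := by
    rintro rfl
    simp at hux
  obtain ⟨hadj, hdist⟩ := hT.connected.adj_stepToward hvx
  exact hT.eq_of_adj_of_dist_add_one hadj hdist hu hux

lemma IsTree.stepToward_eq_of_onTreePath (hT : G.IsTree) (hy : v ≠ y)
    (h : onTreePath G v y x) : G.stepToward v y = G.stepToward v x := by
  obtain ⟨hadj, hdist⟩ := hT.connected.adj_stepToward hy
  refine (hT.stepToward_eq hadj ?_).symm
  unfold onTreePath at h
  have := hT.connected.dist_triangle (u := G.stepToward v y) (v := y) (w := x)
  have := hT.connected.dist_triangle (u := v) (v := G.stepToward v y) (w := x)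
  rw [dist_eq_one_iff_adj.mpr hadj] at this
  omega

lemma IsTree.stepToward_eq_of_adj (hT : G.IsTree) (hxy : G.Adj x y) (hx : v ≠ x) (hy : v ≠ y) :
    G.stepToward v x = G.stepToward v y := by
  have h1 := dist_eq_one_iff_adj.mpr hxy
  have h1' := dist_eq_one_iff_adj.mpr hxy.symm
  rcases hT.dist_eq_dist_add_one_of_adj v hxy with h | h
  · exact (hT.stepToward_eq_of_onTreePath hy (by unfold onTreePath; omega)).symm
  · exact hT.stepToward_eq_of_onTreePath hx (by unfold onTreePath; omega)

lemma IsTree.stepToward_eq_of_notMem_support (hT : G.IsTree) :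
    ∀ {x y : V} (p : G.Walk x y), v ∉ p.support → G.stepToward v x = G.stepToward v y
  | _, _, .nil, _ => rfl
  | _, _, .cons hadj q, hv => by
    rw [Walk.support_cons, List.mem_cons, not_or] at hv
    refine (hT.stepToward_eq_of_adj hadj hv.1 ?_).trans (hT.stepToward_eq_of_notMem_support q hv.2)
    rintro rfl
    exact hv.2 q.start_mem_support

lemma IsTree.onTreePath_of_stepToward_ne (hT : G.IsTree)
    (h : G.stepToward v x ≠ G.stepToward v y) : onTreePath G x v y := by
  classical
  obtain ⟨p, hp⟩ := hT.connected.exists_walk_length_eq_dist x y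
  have hv : v ∈ p.support := by
    by_contra hv
    exact h (hT.stepToward_eq_of_notMem_support p hv)
  have hsplit := congrArg Walk.length (p.take_spec hv)
  rw [Walk.length_append] at hsplit
  have := dist_le (p.takeUntil v hv)
  have := dist_le (p.dropUntil v hv)
  have := hT.connected.dist_triangle (u := x) (v := v) (w := y)
  unfold onTreePath
  omega

lemma IsTree.exists_adj_dist_eq_add_one [Fintype V] [DecidableRel G.Adj] [Nontrivial V]
    (hT : G.IsTree) (v : V) (hy : G.degree y ≠ 1) :
    ∃ z, G.Adj y z ∧ G.dist v z = G.dist v y + 1 := by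
  by_contra! hfar
  have hnbr : G.neighborFinset y ⊆ {G.stepToward y v} := fun z hz => by
    rw [mem_neighborFinset] at hz
    have hzv : G.dist z v + 1 = G.dist y v := by
      rw [dist_comm, dist_comm (u := y)]
      have := hT.dist_eq_dist_add_one_of_adj v hz
      have := hfar z hz
      omega
    exact mem_singleton.mpr (hT.stepToward_eq hz hzv).symm
  have := card_le_card hnbr
  have := hT.connected.preconnected.degree_pos_of_nontrivial y
  rw [card_neighborFinset_eq_degree, card_singleton] at *
  omega

lemma IsTree.exists_degree_eq_one_onTreePath [Fintype V] [DecidableRel G.Adj] [Nontrivial V]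
    (hT : G.IsTree) (v x : V) : ∃ ℓ, G.degree ℓ = 1 ∧ onTreePath G v x ℓ := by
  classical
  obtain ⟨ℓ, hℓ, hmax⟩ := ({y | onTreePath G v x y} : Finset V).exists_max_image (G.dist v)
    ⟨x, (mem_filter_univ x).mpr (by simp [onTreePath])⟩
  rw [mem_filter_univ] at hℓ
  refine ⟨ℓ, ?_, hℓ⟩
  by_contra hdeg
  obtain ⟨z, hadj, hz⟩ := hT.exists_adj_dist_eq_add_one v hdeg
  have hzpath : onTreePath G v x z := by
    unfold onTreePath at *
    have := hT.connected.dist_triangle (u := v) (v := x) (w := z)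
    have := hT.connected.dist_triangle (u := x) (v := ℓ) (w := z)
    rw [dist_eq_one_iff_adj.mpr hadj] at this
    omega
  have := hmax z (by simpa using hzpath)
  omega

lemma Connected.two_mul_card_stepToward_eq_le {ι : Type*} [Fintype ι] [DecidableEq V]
    (hc : G.Connected) {g : ι → V} (hg : Function.Injective g) (hι : 2 ≤ Fintype.card ι)
    (hw : ∀ u, ∑ i, G.dist w (g i) ≤ ∑ i, G.dist u (g i)) (u : V) :
    2 * #{i | G.stepToward w (g i) = u} ≤ Fintype.card ι := by
  have ne_of_stepToward_ne {i : ι} (hi : G.stepToward w (g i) ≠ w) : w ≠ g i :=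
    fun h => hi (hc.stepToward_eq_self_iff.mpr h.symm)
  by_cases huw : u = w
  · subst huw
    suffices #{i | G.stepToward u (g i) = u} ≤ 1 by omega
    refine card_le_one.mpr fun i hi j hj => hg ?_
    rw [mem_filter_univ] at hi hj
    exact (hc.stepToward_eq_self_iff.mp hi).trans (hc.stepToward_eq_self_iff.mp hj).symm
  rcases eq_empty_or_nonempty ({i | G.stepToward w (g i) = u} : Finset ι) with hF | ⟨i₀, hi₀⟩
  · simp [hF]
  rw [mem_filter_univ] at hi₀
  have hwu : G.Adj w u := hi₀ ▸ (hc.adj_stepToward (ne_of_stepToward_ne (hi₀ ▸ huw))).1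
  -- Moving from `w` to `u` brings every `g i` of the branch at `u` one step closer and every
  -- other one at most one step farther.
  have key (i : ι) :
      G.dist u (g i) + 2 * (if G.stepToward w (g i) = u then 1 else 0) ≤ G.dist w (g i) + 1 := by
    split_ifs with hi
    · have := (hc.adj_stepToward (ne_of_stepToward_ne (hi ▸ huw))).2
      rw [hi] at this
      omega
    · have := hc.dist_triangle (u := u) (v := w) (w := g i)
      rw [dist_eq_one_iff_adj.mpr hwu.symm] at this
      omega
  have hsum := sum_le_sum fun i (_ : i ∈ univ) => key i
  rw [sum_add_distrib, sum_add_distrib, ← mul_sum, ← card_filter, sum_const, card_univ,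
    smul_eq_mul, mul_one] at hsum
  have := hw u
  omega

end SimpleGraph

theorem exists_center_and_pairing_general [Fintype V]
    (G : SimpleGraph V) [DecidableRel G.Adj] (hT : G.IsTree)
    (n : ℕ) (hn : 1 ≤ n) (hcard : Nat.card (leafSet G) = 2 * n) :
    ∃ v : V, ∃ α : leafSet G → leafSet G, Function.Bijective α ∧
      (∀ x : V, ∃ ℓ : leafSet G, onTreePath G (ℓ : V) x (α ℓ : V)) ∧
      (∀ ℓ : leafSet G, onTreePath G (ℓ : V) v (α ℓ : V)) := by
  classical
  have : Nontrivial V := Set.nontrivial_of_nontrivial_coe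
    (Finite.one_lt_card_iff_nontrivial (α := leafSet G) |>.mp (by omega))
  rw [Nat.card_eq_fintype_card] at hcard
  obtain ⟨v, hv⟩ := Finite.exists_min fun w => ∑ ℓ : leafSet G, G.dist w ℓ
  obtain ⟨α, hα, hne⟩ := Fintype.exists_bijective_forall_ne_of_two_mul_card_fiber_le
    (fun ℓ : leafSet G => G.stepToward v ℓ)
    (hT.connected.two_mul_card_stepToward_eq_le Subtype.val_injective (by omega) hv)
  have hpath (ℓ : leafSet G) : onTreePath G ℓ v (α ℓ) :=
    hT.onTreePath_of_stepToward_ne (hne ℓ).symm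
  refine ⟨v, α, hα, fun x => ?_, hpath⟩
  obtain ⟨m, hm, hvxm⟩ := hT.exists_degree_eq_one_onTreePath v x
  obtain ⟨ℓ, hℓ⟩ := hα.surjective ⟨m, hm⟩
  exact ⟨ℓ, hT.connected.onTreePath_trans_right (hpath ℓ) (hℓ ▸ hvxm)⟩

/-- **Theorem 2.** Let `T'` be a tree with `2n` leaves (`n ≥ 1`). Then there exists a
vertex `v` and a bijection `α : 𝓛 → 𝓛` of the set of leaves such that the path system
`P_{ℓ, α(ℓ)}` (`ℓ ∈ 𝓛`) covers each vertex of `T'` and all of these paths contain `v`. -/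
theorem exists_center_and_pairing [Fintype V] [DecidableEq V]
    (G : SimpleGraph V) [DecidableRel G.Adj] (hT : G.IsTree)
    (n : ℕ) (hn : 1 ≤ n) (hcard : Nat.card (leafSet G) = 2 * n) :
    ∃ v : V, ∃ α : leafSet G → leafSet G, Function.Bijective α ∧
      (∀ x : V, ∃ ℓ : leafSet G, onTreePath G (ℓ : V) x (α ℓ : V)) ∧
      (∀ ℓ : leafSet G, onTreePath G (ℓ : V) v (α ℓ : V)) :=
  exists_center_and_pairing_general G hT n hn hcard
end

section
/- Let T' be a finite tree with exactly 2n leaves, n ≥ 1, and let 𝓛 denote its set of leaves. Then for every balanced vertex v of T' there exists a bijection α : 𝓛 → 𝓛 such that the collection of unique paths P_{ℓ, α(ℓ)} for ℓ ∈ 𝓛 covers every edge of T', and every one of these paths contains v. -/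
open SimpleGraph Finset

variable {V : Type*}

variable [Fintype V] [DecidableEq V]

/-- The set of edges incident to `v`, as a finset. -/
def incEdges (G : SimpleGraph V) [DecidableRel G.Adj] (v : V) : Finset (Sym2 V) :=
  G.edgeFinset.filter (fun e => v ∈ e)

open Classical in
/-- `δ(v,e)`: the number of leaves `ℓ` such that the unique path from `v` to `ℓ`
contains the edge `e` (i.e. both endpoints of `e` lie on that path). -/
noncomputable def treeDelta (G : SimpleGraph V) [DecidableRel G.Adj] (v : V) (e : Sym2 V) : ℕ :=
  (Finset.univ.filter fun ℓ : V =>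
    G.degree ℓ = 1 ∧ ∀ x ∈ e, onTreePath G v x ℓ).card

/-- A vertex `v` is balanced if for every edge `e` incident to `v`,
`δ(v,e) ≤ Σ { δ(v,f) : f ∈ E(v), f ≠ e }`. -/
def IsBalanced (G : SimpleGraph V) [DecidableRel G.Adj] (v : V) : Prop :=
  ∀ e ∈ incEdges G v, treeDelta G v e ≤ ∑ f ∈ (incEdges G v).erase e, treeDelta G v f

/-!
Seen from `v`, every leaf `ℓ` lies beyond exactly one neighbour `u` of `v`, and `δ(v, vu)` counts
the leaves beyond `u`. These classes partition the `2n` leaves, so balance at `v` says that each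
class has at most `n` leaves. List the leaves sorted by class and match positions `i` and `i + n`:
a class containing both would contain the `n + 1` positions between them, so every leaf is matched
with a leaf of another class, and the tree path between leaves of different classes passes through
`v`. Finally, every edge lies on the path from `v` to some leaf `ℓ` (a vertex beyond the edge that
is farthest from `v` is a leaf), hence also on the path from `ℓ` through `v` to its partner.
-/

theorem Monotone.apply_natAdd_ne_apply_castAdd {β : Type*} [PartialOrder β] {n : ℕ}
    {g : Fin (n + n) → β} (hg : Monotone g) (hfib : ∀ b, Nat.card {i // g i = b} ≤ n)
    (j : Fin n) : g (Fin.natAdd n j) ≠ g (Fin.castAdd n j) := by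
  intro heq
  have hIcc : ∀ k ∈ Finset.Icc (Fin.castAdd n j) (Fin.natAdd n j), g k = g (Fin.castAdd n j) :=
    fun k hk => le_antisymm (heq ▸ hg (Finset.mem_Icc.mp hk).2) (hg (Finset.mem_Icc.mp hk).1)
  have hcard : n + 1 ≤ n := calc
    n + 1 = (Finset.Icc (Fin.castAdd n j) (Fin.natAdd n j)).card := by
          simp only [Fin.card_Icc, Fin.val_natAdd, Fin.val_castAdd]; omega
    _ = Nat.card (Finset.Icc (Fin.castAdd n j) (Fin.natAdd n j)) := (Nat.card_eq_finsetCard _).symm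
    _ ≤ Nat.card {i // g i = g (Fin.castAdd n j)} :=
          Nat.card_le_card_of_injective (fun k => ⟨k, hIcc k k.2⟩) fun _ _ h => by
            simpa using congrArg Subtype.val h
    _ ≤ n := hfib _
  omega

theorem Monotone.apply_finAddFlip_ne {β : Type*} [PartialOrder β] {n : ℕ}
    {g : Fin (n + n) → β} (hg : Monotone g) (hfib : ∀ b, Nat.card {i // g i = b} ≤ n)
    (i : Fin (n + n)) : g (finAddFlip i) ≠ g i := by
  induction i using Fin.addCases with
  | left j => rw [finAddFlip_apply_castAdd]; exact hg.apply_natAdd_ne_apply_castAdd hfib j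
  | right j => rw [finAddFlip_apply_natAdd]; exact (hg.apply_natAdd_ne_apply_castAdd hfib j).symm

theorem exists_perm_apply_ne_of_card_fiber_le {α β : Type*} [Finite α] (f : α → β) {n : ℕ}
    (hα : Nat.card α = n + n) (hfib : ∀ b, Nat.card {x // f x = b} ≤ n) :
    ∃ σ : Equiv.Perm α, ∀ x, f (σ x) ≠ f x := by
  let _ : LinearOrder β := IsWellOrder.linearOrder WellOrderingRel
  let e₀ : Fin (n + n) ≃ α := (Finite.equivFinOfCardEq hα).symm
  let e : Fin (n + n) ≃ α := (Tuple.sort (f ∘ e₀)).trans e₀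
  have hmono : Monotone (f ∘ e) := Tuple.monotone_sort (f ∘ e₀)
  have hfib' : ∀ b, Nat.card {i // (f ∘ e) i = b} ≤ n := fun b =>
    (Nat.card_congr (e.subtypeEquiv fun _ => Iff.rfl)).trans_le (hfib b)
  refine ⟨e.permCongr finAddFlip, fun x => ?_⟩
  simpa [Equiv.permCongr_apply] using hmono.apply_finAddFlip_ne hfib' (e.symm x)

section TreeGeodesics

-- Re-declaring `V` keeps the ambient `[Fintype V] [DecidableEq V]` out of these lemmas.
variable {V : Type*} {G : SimpleGraph V} {u w x y : V}

theorem onTreePath.symm (h : onTreePath G u x w) : onTreePath G w x u := by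
  unfold onTreePath at *
  rw [G.dist_comm (u := w), G.dist_comm (v := u), add_comm, h, G.dist_comm]

theorem onTreePath_left (u w : V) : onTreePath G u u w := by
  simp [onTreePath]

theorem forall_mem_mk_onTreePath_iff : (∀ x ∈ s(u, y), onTreePath G u x w) ↔ onTreePath G u y w :=
  ⟨fun h => h y (Sym2.mem_mk_right u y), fun h x hx => by
    rcases Sym2.mem_iff.mp hx with rfl | rfl
    · exact onTreePath_left _ _
    · exact h⟩

theorem onTreePath.trans (hG : G.Connected) (h₁ : onTreePath G u x y)
    (h₂ : onTreePath G u y w) : onTreePath G u x w := by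
  have := hG.dist_triangle (u := x) (v := y) (w := w)
  have := hG.dist_triangle (u := u) (v := x) (w := w)
  unfold onTreePath at *
  omega

theorem SimpleGraph.IsTree.length_eq_dist {p : G.Walk u w} (hT : G.IsTree) (hp : p.IsPath) :
    p.length = G.dist u w := by
  obtain ⟨q, hq, hql⟩ := hT.connected.exists_path_of_dist u w
  rw [(hT.existsUnique_path u w).unique hp hq, hql]

theorem SimpleGraph.IsTree.onTreePath_iff_mem_support {p : G.Walk u w} (hT : G.IsTree)
    (hp : p.IsPath) : onTreePath G u x w ↔ x ∈ p.support := by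
  classical
  constructor
  · intro hx
    obtain ⟨q, -, hq⟩ := hT.connected.exists_path_of_dist u x
    obtain ⟨r, -, hr⟩ := hT.connected.exists_path_of_dist x w
    have hqr : (q.append r).IsPath := Walk.isPath_of_length_eq_dist _ <| by
      rw [Walk.length_append, hq, hr]; exact hx
    rw [(hT.existsUnique_path u w).unique hp hqr]
    exact (Walk.mem_support_append_iff _ _).mpr (.inl q.end_mem_support)
  · intro hx
    have hle := add_le_add (dist_le (p.takeUntil x hx)) (dist_le (p.dropUntil x hx))
    rw [← Walk.length_append, p.take_spec hx, hT.length_eq_dist hp] at hle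
    exact le_antisymm hle hT.connected.dist_triangle

theorem SimpleGraph.IsTree.existsUnique_adj_onTreePath (hT : G.IsTree) (huw : u ≠ w) :
    ∃! y, G.Adj u y ∧ onTreePath G u y w := by
  obtain ⟨p, hp, -⟩ := hT.connected.exists_path_of_dist u w
  have hnil : ¬p.Nil := Walk.not_nil_of_ne huw
  refine ⟨p.snd, ⟨p.adj_snd hnil, (hT.onTreePath_iff_mem_support hp).mpr
    (List.mem_of_mem_tail (Walk.snd_mem_tail_support hnil))⟩, ?_⟩
  rintro y ⟨hadj, hy⟩
  exact hT.isAcyclic.eq_snd_of_adj_start hp hadj ((hT.onTreePath_iff_mem_support hp).mp hy)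

theorem SimpleGraph.IsAcyclic.isPath_reverse_append {p : G.Walk u x} {q : G.Walk u y}
    (hG : G.IsAcyclic) (hp : p.IsPath) (hq : q.IsPath) (hsnd : p.snd ≠ q.snd) :
    (p.reverse.append q).IsPath := by
  classical
  have hcommon : ∀ z ∈ p.support, z ∈ q.support → z = u := by
    intro z hzp hzq
    by_contra hzu
    apply hsnd
    have hpath := (hG.subsingleton_path u z).elim ⟨_, hp.takeUntil hzp⟩ ⟨_, hq.takeUntil hzq⟩
    rw [← Walk.snd_takeUntil hzu p hzp, ← Walk.snd_takeUntil hzu q hzq, Subtype.mk.inj hpath]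
  have hq_nodup := q.cons_tail_support.symm ▸ hq.support_nodup
  rw [Walk.isPath_def, Walk.support_append, Walk.support_reverse]
  refine (List.nodup_reverse.mpr hp.support_nodup).append (List.nodup_cons.mp hq_nodup).2
    fun z hzp hzq => ?_
  obtain rfl := hcommon z (List.mem_reverse.mp hzp) (List.mem_of_mem_tail hzq)
  exact (List.nodup_cons.mp hq_nodup).1 hzq

theorem SimpleGraph.IsTree.onTreePath_of_adj_ne {u₁ u₂ : V} (hT : G.IsTree)
    (h₁ : G.Adj u u₁ ∧ onTreePath G u u₁ x) (h₂ : G.Adj u u₂ ∧ onTreePath G u u₂ y)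
    (hne : u₁ ≠ u₂) : onTreePath G x u y := by
  obtain ⟨p, hp, hpl⟩ := hT.connected.exists_path_of_dist u x
  obtain ⟨q, hq, hql⟩ := hT.connected.exists_path_of_dist u y
  have hsnd : p.snd ≠ q.snd := by
    rwa [← hT.isAcyclic.eq_snd_of_adj_start hp h₁.1 <| (hT.onTreePath_iff_mem_support hp).mp h₁.2,
      ← hT.isAcyclic.eq_snd_of_adj_start hq h₂.1 <| (hT.onTreePath_iff_mem_support hq).mp h₂.2]
  have := hT.length_eq_dist (hT.isAcyclic.isPath_reverse_append hp hq hsnd)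
  rw [Walk.length_append, Walk.length_reverse, hpl, hql, G.dist_comm (u := u)] at this
  exact this

theorem SimpleGraph.IsTree.exists_degree_eq_one_onTreePath_s2 [Fintype V] [DecidableRel G.Adj]
    (hT : G.IsTree) (hux : u ≠ x) : ∃ ℓ, G.degree ℓ = 1 ∧ onTreePath G u x ℓ := by
  classical
  -- A vertex beyond `x` farthest from `u` is a leaf: its only neighbour is its parent toward `u`.
  obtain ⟨ℓ, hℓ, hmax⟩ :=
    (Finset.univ.filter (onTreePath G u x)).exists_max_image (G.dist u) ⟨x, by simp [onTreePath]⟩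
  replace hℓ : onTreePath G u x ℓ := (Finset.mem_filter.mp hℓ).2
  have hℓu : ℓ ≠ u := by
    rintro rfl
    have : G.dist ℓ x = 0 := by unfold onTreePath at hℓ; rw [dist_self] at hℓ; omega
    exact hux (hT.connected.dist_eq_zero_iff.mp this)
  have hparent := hT.existsUnique_adj_onTreePath hℓu
  obtain ⟨y, hy⟩ := hparent.exists
  refine ⟨ℓ, degree_eq_one_iff_existsUnique_adj.mpr ⟨y, hy.1, fun z hz => ?_⟩, hℓ⟩
  refine hparent.unique ⟨hz, ?_⟩ hy
  have hℓz := dist_eq_one_iff_adj.mpr hz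
  rcases hT.dist_eq_dist_add_one_of_adj u hz with h | h
  · unfold onTreePath
    rw [G.dist_comm (u := z), G.dist_comm (u := ℓ) (v := u)]
    omega
  · have hz : onTreePath G u ℓ z := by unfold onTreePath; omega
    have := hmax z (Finset.mem_filter.mpr ⟨Finset.mem_univ z, hℓ.trans hT.connected hz⟩)
    omega

theorem SimpleGraph.IsTree.exists_degree_eq_one_forall_mem_onTreePath [Fintype V]
    [DecidableRel G.Adj] (hT : G.IsTree) (u : V) {e : Sym2 V} (he : e ∈ G.edgeSet) :
    ∃ ℓ, G.degree ℓ = 1 ∧ ∀ x ∈ e, onTreePath G u x ℓ := by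
  induction e using Sym2.ind with
  | _ a b =>
  rw [mem_edgeSet] at he
  wlog hab : G.dist u b = G.dist u a + 1 generalizing a b
  · rw [Sym2.eq_swap]
    exact this b a he.symm <|
      (hT.dist_eq_dist_add_one_of_adj u he).resolve_right hab
  have hadj : G.dist a b = 1 := dist_eq_one_iff_adj.mpr he
  have hub : u ≠ b := by rintro rfl; simp at hab
  obtain ⟨ℓ, hℓ, hbℓ⟩ := hT.exists_degree_eq_one_onTreePath_s2 hub
  have hab' : onTreePath G u a b := by unfold onTreePath; omega
  refine ⟨ℓ, hℓ, fun x hx => ?_⟩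
  rcases Sym2.mem_iff.mp hx with rfl | rfl
  · exact hab'.trans hT.connected hbℓ
  · exact hbℓ

end TreeGeodesics

section Balanced

variable {G : SimpleGraph V} [DecidableRel G.Adj] {v u : V} {e : Sym2 V}

theorem mk_mem_incEdges (h : G.Adj v u) : s(v, u) ∈ incEdges G v :=
  Finset.mem_filter.mpr ⟨G.mem_edgeFinset.mpr h, Sym2.mem_mk_left v u⟩

theorem exists_adj_eq_mk_of_mem_incEdges (he : e ∈ incEdges G v) :
    ∃ u, G.Adj v u ∧ e = s(v, u) := by
  obtain ⟨he, hve⟩ := Finset.mem_filter.mp he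
  obtain ⟨u, rfl⟩ := Sym2.mem_iff_exists.mp hve
  exact ⟨u, G.mem_edgeFinset.mp he, rfl⟩

theorem card_fiber_le_treeDelta {f : leafSet G → V} (hf : ∀ ℓ, onTreePath G v (f ℓ) ℓ)
    (u : V) : Nat.card {ℓ // f ℓ = u} ≤ treeDelta G v s(v, u) := by
  classical
  unfold treeDelta
  rw [← Nat.card_eq_finsetCard]
  refine Nat.card_le_card_of_injective (fun ℓ => ⟨ℓ.1, Finset.mem_filter.mpr
    ⟨Finset.mem_univ _, ℓ.1.2, forall_mem_mk_onTreePath_iff.mpr ?_⟩⟩) fun ℓ₁ ℓ₂ h => ?_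
  · have := hf ℓ.1
    rwa [ℓ.2] at this
  · exact Subtype.ext (Subtype.ext (Subtype.mk.inj h))

theorem SimpleGraph.IsTree.sum_treeDelta_le (hT : G.IsTree) (v : V) :
    ∑ e ∈ incEdges G v, treeDelta G v e ≤ Nat.card (leafSet G) := by
  classical
  let beyond (e : Sym2 V) : Finset V :=
    {ℓ | G.degree ℓ = 1 ∧ ∀ x ∈ e, onTreePath G v x ℓ}
  have hdisj : (incEdges G v : Set (Sym2 V)).PairwiseDisjoint beyond := by
    intro e he e' he' hne
    obtain ⟨u, hu, rfl⟩ := exists_adj_eq_mk_of_mem_incEdges he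
    obtain ⟨u', hu', rfl⟩ := exists_adj_eq_mk_of_mem_incEdges he'
    refine Finset.disjoint_left.mpr fun ℓ hℓ hℓ' => hne ?_
    have h₁ := forall_mem_mk_onTreePath_iff.mp (Finset.mem_filter.mp hℓ).2.2
    have h₂ := forall_mem_mk_onTreePath_iff.mp (Finset.mem_filter.mp hℓ').2.2
    have hvℓ : v ≠ ℓ := by
      rintro rfl
      have := dist_eq_one_iff_adj.mpr hu
      unfold onTreePath at h₁
      rw [dist_self] at h₁
      omega
    rw [(hT.existsUnique_adj_onTreePath hvℓ).unique ⟨hu, h₁⟩ ⟨hu', h₂⟩]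
  calc ∑ e ∈ incEdges G v, treeDelta G v e = ((incEdges G v).biUnion beyond).card := by
        rw [Finset.card_biUnion hdisj]; rfl
    _ ≤ (Finset.univ.filter fun ℓ => G.degree ℓ = 1).card :=
        Finset.card_le_card <| Finset.biUnion_subset.mpr fun _ _ ℓ hℓ =>
          Finset.mem_filter.mpr ⟨Finset.mem_univ ℓ, (Finset.mem_filter.mp hℓ).2.1⟩
    _ = Nat.card (leafSet G) := by
        simp [leafSet, Nat.card_eq_fintype_card, Fintype.card_subtype]

theorem IsBalanced.two_mul_treeDelta_le (hT : G.IsTree) (hv : IsBalanced G v)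
    (he : e ∈ incEdges G v) : 2 * treeDelta G v e ≤ Nat.card (leafSet G) := by
  have := hv e he
  have := Finset.add_sum_erase _ (treeDelta G v) he
  have := hT.sum_treeDelta_le v
  omega

theorem IsBalanced.degree_ne_one (hT : G.IsTree) (hv : IsBalanced G v) : G.degree v ≠ 1 := by
  classical
  intro hdeg
  obtain ⟨u, hu, huniq⟩ := degree_eq_one_iff_existsUnique_adj.mp hdeg
  have hlone : (incEdges G v).erase s(v, u) = ∅ := by
    refine Finset.eq_empty_of_forall_notMem fun e he => ?_
    obtain ⟨hne, he⟩ := Finset.mem_erase.mp he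
    obtain ⟨u', hu', rfl⟩ := exists_adj_eq_mk_of_mem_incEdges he
    exact hne (huniq u' hu' ▸ rfl)
  obtain ⟨ℓ, hℓ, huℓ⟩ := hT.exists_degree_eq_one_onTreePath_s2 hu.ne
  have hpos : 0 < treeDelta G v s(v, u) := Finset.card_pos.mpr
    ⟨ℓ, Finset.mem_filter.mpr ⟨Finset.mem_univ ℓ, hℓ, forall_mem_mk_onTreePath_iff.mpr huℓ⟩⟩
  have := hv _ (mk_mem_incEdges hu)
  rw [hlone, Finset.sum_empty] at this
  omega

end Balanced

theorem balanced_vertex_pairing_general (G : SimpleGraph V) [DecidableRel G.Adj] (hT : G.IsTree)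
    (n : ℕ) (hcard : Nat.card (leafSet G) = 2 * n)
    (v : V) (hv : IsBalanced G v) :
    ∃ α : leafSet G → leafSet G, Function.Bijective α ∧
      (∀ e ∈ G.edgeSet, ∃ ℓ : leafSet G, ∀ x ∈ e, onTreePath G (ℓ : V) x (α ℓ : V)) ∧
      (∀ ℓ : leafSet G, onTreePath G (ℓ : V) v (α ℓ : V)) := by
  have hvℓ : ∀ ℓ : leafSet G, v ≠ ℓ := fun ℓ h => hv.degree_ne_one hT (h ▸ ℓ.2)
  choose f hf using fun ℓ : leafSet G => (hT.existsUnique_adj_onTreePath (hvℓ ℓ)).exists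
  have hfib : ∀ u, Nat.card {ℓ // f ℓ = u} ≤ n := by
    intro u
    by_cases hu : G.Adj v u
    · have := hv.two_mul_treeDelta_le hT (mk_mem_incEdges hu)
      have := card_fiber_le_treeDelta (fun ℓ => (hf ℓ).2) u
      omega
    · have : IsEmpty {ℓ // f ℓ = u} := ⟨fun ℓ => hu (ℓ.2 ▸ (hf ℓ.1).1)⟩
      simp
  obtain ⟨σ, hσ⟩ := exists_perm_apply_ne_of_card_fiber_le f (hcard.trans (two_mul n)) hfib
  have hthrough : ∀ ℓ : leafSet G, onTreePath G ℓ v (σ ℓ) := fun ℓ =>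
    hT.onTreePath_of_adj_ne (hf ℓ) (hf (σ ℓ)) (hσ ℓ).symm
  refine ⟨σ, σ.bijective, fun e he => ?_, hthrough⟩
  obtain ⟨ℓ, hℓ, hℓe⟩ := hT.exists_degree_eq_one_forall_mem_onTreePath v he
  exact ⟨⟨ℓ, hℓ⟩, fun x hx => (hℓe x hx).symm.trans hT.connected (hthrough _)⟩

/-- **Lemma 2.** Let `T'` be a tree with `2n` leaves (`n ≥ 1`). Then for every balanced
vertex `v` there exists a bijection `α` of the set of leaves such that the paths
`P_{ℓ, α(ℓ)}` cover all edges of `T'` and all of these paths contain `v`. -/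
theorem balanced_vertex_pairing (G : SimpleGraph V) [DecidableRel G.Adj] (hT : G.IsTree)
    (n : ℕ) (hn : 1 ≤ n) (hcard : Nat.card (leafSet G) = 2 * n)
    (v : V) (hv : IsBalanced G v) :
    ∃ α : leafSet G → leafSet G, Function.Bijective α ∧
      (∀ e ∈ G.edgeSet, ∃ ℓ : leafSet G, ∀ x ∈ e, onTreePath G (ℓ : V) x (α ℓ : V)) ∧
      (∀ ℓ : leafSet G, onTreePath G (ℓ : V) v (α ℓ : V)) :=
  balanced_vertex_pairing_general G hT n hcard v hv
end

section
/- Let T be a white–grey tree with w white leaves whose root has exactly two neighbors: one a grey leaf (so g = 1) and the other a branching vertex. Suppose w is odd and no white leaf of T is short. Then cost(T) = w + ⌈g/2⌉ = w + 1. -/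
open SimpleGraph Finset

/-- Colors of vertices in a white–grey tree. -/
inductive WGColor : Type
  | white
  | grey
  | uncolored
  deriving DecidableEq

/-- A white–grey tree: a finite rooted tree with vertices colored white, grey or uncolored,
whose root is uncolored, whose grey vertices are all children (neighbors) of the root,
whose leaves that are not children of the root are white, and whose uncolored vertices
other than the root are branching points (degree at least 3). -/
structure WGTree : Type 1 where
  V : Type
  [fintypeV : Fintype V]
  [decEqV : DecidableEq V]
  G : SimpleGraph V
  [decAdj : DecidableRel G.Adj]
  isTree : G.IsTree
  root : V
  color : V → WGColor
  root_uncolored : color root = WGColor.uncolored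
  grey_adj_root : ∀ v : V, color v = WGColor.grey → G.Adj root v
  leaf_white : ∀ v : V, G.degree v = 1 → ¬ G.Adj root v → color v = WGColor.white
  uncolored_branching : ∀ v : V, color v = WGColor.uncolored → v ≠ root → 3 ≤ G.degree v

attribute [instance] WGTree.fintypeV WGTree.decEqV WGTree.decAdj

namespace WGTree

variable (T : WGTree)

/-- `x` lies on the unique path between `u` and `v` (in a tree this is the
standard metric characterization). -/
def onPath (u x v : T.V) : Prop := T.G.dist u x + T.G.dist x v = T.G.dist u v

/-- The vertex set of the unique path whose (unordered) pair of endpoints is `p`. -/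
def pathVerts (p : Sym2 T.V) : Set T.V := {x | ∃ u v : T.V, p = s(u, v) ∧ T.onPath u x v}

/-- A vertex is colored if it is white or grey. -/
def Colored (v : T.V) : Prop := T.color v ≠ WGColor.uncolored

open Classical in
/-- The cost of a path (given by its endpoint pair): 1 for a short path (a single vertex)
or a grey path (both endpoints grey), and 2 otherwise (a long path). -/
noncomputable def pathCost (p : Sym2 T.V) : ℕ :=
  if p.IsDiag then 1 else if ∀ x ∈ p, T.color x = WGColor.grey then 1 else 2

/-- The cost of a path system is the sum of the costs of its paths. -/
noncomputable def coverCost (P : Finset (Sym2 T.V)) : ℕ := ∑ p ∈ P, T.pathCost p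

/-- `P` is a colored cover of the subtree induced on the vertex set `W`:
every path lies in `W`, every path has colored endpoints, and every colored
vertex of `W` lies on some path. -/
def IsCoverOn (W : Set T.V) (P : Finset (Sym2 T.V)) : Prop :=
  (∀ p ∈ P, T.pathVerts p ⊆ W) ∧
  (∀ p ∈ P, ∀ x ∈ p, T.Colored x) ∧
  (∀ v ∈ W, T.Colored v → ∃ p ∈ P, v ∈ T.pathVerts p)

/-- The minimum cost of a colored cover of the subtree induced on `W`. -/
noncomputable def costOn (W : Set T.V) : ℕ :=
  sInf {c : ℕ | ∃ P : Finset (Sym2 T.V), T.IsCoverOn W P ∧ T.coverCost P = c}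

/-- The minimum cost of a colored cover of the whole white–grey tree. -/
noncomputable def cost : ℕ := T.costOn Set.univ

/-- An optimal colored cover of the subtree induced on `W`. -/
def IsOptimalCoverOn (W : Set T.V) (P : Finset (Sym2 T.V)) : Prop :=
  T.IsCoverOn W P ∧ T.coverCost P = T.costOn W

/-- A grey leaf. -/
def isGreyLeaf (v : T.V) : Prop := T.color v = WGColor.grey ∧ T.G.degree v = 1

open Classical in
/-- The number of grey leaves. -/
noncomputable def greyLeafCount : ℕ := (Finset.univ.filter fun v => T.isGreyLeaf v).card

open Classical in
/-- The number of white leaves. -/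
noncomputable def whiteLeafCount : ℕ :=
  (Finset.univ.filter fun v : T.V => T.color v = WGColor.white ∧ T.G.degree v = 1).card

open Classical in
/-- The number of neighbors of the root that are not grey leaves, i.e. the degree
the root would have after deleting all grey leaves. -/
noncomputable def rootReducedDegree : ℕ :=
  ((T.G.neighborFinset T.root).filter fun v => ¬ T.isGreyLeaf v).card

/-- The vertex set of the subtree `T_w` obtained by deleting all grey leaves
(and the root, if it would thereby become a leaf). -/
def Ww : Set T.V := {v | ¬ T.isGreyLeaf v ∧ (v = T.root → T.rootReducedDegree ≠ 1)}

open Classical in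
/-- The degree of `v` inside the subtree induced on `W`. -/
noncomputable def degOn (W : Set T.V) (v : T.V) : ℕ :=
  ((T.G.neighborFinset v).filter fun u => u ∈ W).card

/-- `v` is a short leaf of the subtree induced on `W`: a leaf adjacent to a
branching vertex (a vertex with at least three neighbors) of that subtree. -/
def IsShortLeafOn (W : Set T.V) (v : T.V) : Prop :=
  v ∈ W ∧ T.degOn W v = 1 ∧ ∃ u ∈ W, T.G.Adj v u ∧ 3 ≤ T.degOn W u

/-- The subtree induced on `W` has a short leaf. -/
def HasShortLeafOn (W : Set T.V) : Prop := ∃ v, T.IsShortLeafOn W v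

/-- A branching vertex: at least three neighbors. -/
def Branching (v : T.V) : Prop := 3 ≤ T.G.degree v

/-- A dangerous vertex: when exactly one child of the root is not a grey leaf,
the colored vertices between the root and the first branching point. -/
def Dangerous (x : T.V) : Prop :=
  T.rootReducedDegree = 1 ∧ T.Colored x ∧ ¬ T.isGreyLeaf x ∧ ¬ T.Branching x ∧
  ∀ b : T.V, b ≠ T.root → T.Branching b → T.onPath T.root x b

/-- A mixed path: it contains at least two colored vertices and exactly one of
its colored vertices is a grey leaf. -/
def IsMixed (p : Sym2 T.V) : Prop :=
  (∃ x ∈ T.pathVerts p, ∃ y ∈ T.pathVerts p, x ≠ y ∧ T.Colored x ∧ T.Colored y) ∧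
  (∃! g : T.V, g ∈ T.pathVerts p ∧ T.isGreyLeaf g)

/-- `q` is the (nonempty) trace of the path `p` on `T_w`: the restriction of `p`
to the vertices of `T_w`, with the initial uncolored vertices deleted; equivalently,
the subpath of `p ∩ T_w` spanned by the colored vertices of `p ∩ T_w`. -/
def IsTraceOf (q p : Sym2 T.V) : Prop :=
  (∀ x ∈ q, x ∈ T.pathVerts p ∩ T.Ww ∧ T.Colored x) ∧
  T.pathVerts q ⊆ T.pathVerts p ∩ T.Ww ∧
  (∀ x ∈ T.pathVerts p ∩ T.Ww, T.Colored x → x ∈ T.pathVerts q)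

/-- The trace of `p` on `T_w` is empty. -/
def HasEmptyTrace (p : Sym2 T.V) : Prop := ∀ x ∈ T.pathVerts p ∩ T.Ww, ¬ T.Colored x

/-- `Q` is the system of traces on `T_w` of the paths of `P`. -/
def IsTraceSystem (P Q : Finset (Sym2 T.V)) : Prop :=
  (∀ q ∈ Q, ∃ p ∈ P, T.IsTraceOf q p) ∧
  (∀ p ∈ P, T.HasEmptyTrace p ∨ ∃ q ∈ Q, T.IsTraceOf q p)

/-- A path `p` of `T_w` is free if it can be extended to a path of `T` that
contains a grey leaf and has the same cost. -/
def IsFree (p : Sym2 T.V) : Prop :=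
  ∃ p' : Sym2 T.V, (∀ x ∈ p', T.Colored x) ∧ T.pathVerts p ⊆ T.pathVerts p' ∧
    (∃ g ∈ T.pathVerts p', T.isGreyLeaf g) ∧ T.pathCost p' = T.pathCost p

end WGTree

/-!
Every leaf other than the root is colored and, lying on a covering path, must be one of its
endpoints. Since `a` is the only grey leaf, a path costs at least the number of leaves it ends in,
so `cost(T) ≥ #leaves = w + 1`. Conversely `w + 1` is even, and a pairing of the leaves that
maximises the total distance between partners covers every vertex: a vertex `z` missed by all the
paths separates no pair, and exchanging partners between two pairs lying in different branches
at `z` would make the total distance larger. The `(w + 1) / 2` paths cost at most `2` each.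
-/

variable {α : Type*}

def IsPairing (S : Finset α) (σ : α → α) : Prop := ∀ x ∈ S, σ x ∈ S ∧ σ (σ x) = x ∧ σ x ≠ x

lemma exists_isPairing_of_even [DecidableEq α] {S : Finset α} (hS : Even #S) :
    ∃ σ, IsPairing S σ := by
  obtain ⟨k, hk⟩ := hS
  let e : S ≃ Fin k × Bool := Fintype.equivOfCardEq (by simp [hk, mul_two])
  let f : S → S := fun y => e.symm ((e y).1, !(e y).2)
  refine ⟨fun x => if hx : x ∈ S then f ⟨x, hx⟩ else x, fun x hx => ?_⟩
  simp only [hx, ↓reduceDIte, SetLike.coe_mem, Subtype.coe_eta, Equiv.apply_symm_apply,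
    Bool.not_not, Prod.mk.eta, Equiv.symm_apply_apply, ne_eq, true_and, f]
  intro h
  have := congrArg (fun y => (e y).2) (Subtype.ext h : f ⟨x, hx⟩ = ⟨x, hx⟩)
  simp [f] at this

lemma Finset.swap_apply_mem [DecidableEq α] {S : Finset α} {x y z : α} (hx : x ∈ S) (hy : y ∈ S)
    (hz : z ∈ S) : Equiv.swap x y z ∈ S := by
  rw [Equiv.swap_apply_def]
  split_ifs <;> assumption

namespace IsPairing

variable [DecidableEq α] {S : Finset α} {σ : α → α} {x y : α}

lemma conj_swap (hσ : IsPairing S σ) (hx : x ∈ S) (hy : y ∈ S) :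
    IsPairing S (Equiv.swap x y ∘ σ ∘ Equiv.swap x y) := by
  intro z hz
  have hτz := swap_apply_mem hx hy hz
  obtain ⟨hmem, hinv, hne⟩ := hσ _ hτz
  refine ⟨swap_apply_mem hx hy hmem, by simp [hinv], fun h => hne ?_⟩
  simpa using congrArg (Equiv.swap x y) h

omit [DecidableEq α] in
lemma injOn (hσ : IsPairing S σ) : Set.InjOn σ S := fun x hx y hy h => by
  rw [← (hσ x hx).2.1, h, (hσ y hy).2.1]

/-- Re-pairing `{x, σ x}, {y, σ y}` as `{x, y}, {σ x, σ y}`. -/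
lemma sum_conj_swap {M : Type*} [AddCommMonoid M] (f : α → α → M) (hσ : IsPairing S σ)
    (hx : x ∈ S) (hy : y ∈ S) (hyx : y ≠ x) (hyσx : y ≠ σ x) :
    ∑ z ∈ S, f z ((Equiv.swap (σ x) y ∘ σ ∘ Equiv.swap (σ x) y) z)
        + (f x (σ x) + f (σ x) x + f y (σ y) + f (σ y) y)
      = ∑ z ∈ S, f z (σ z) + (f x y + f (σ x) (σ y) + f y x + f (σ y) (σ x)) := by
  obtain ⟨hσx, hσσx, hσxx⟩ := hσ x hx
  obtain ⟨hσy, hσσy, hσyy⟩ := hσ y hy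
  have hσyx : σ y ≠ x := fun h => hyσx (by rw [← hσσy, h])
  have hσyσx : σ y ≠ σ x := fun h => hyx (hσ.injOn hy hx h)
  set A : Finset α := {x, σ x, y, σ y}
  have hA : A ⊆ S := by simp [A, insert_subset_iff, *]
  have hout : ∀ z ∈ S \ A, (Equiv.swap (σ x) y ∘ σ ∘ Equiv.swap (σ x) y) z = σ z := by
    intro z hz
    simp only [A, mem_sdiff, mem_insert, mem_singleton, not_or] at hz
    obtain ⟨hzS, hzx, hzσx, hzy, hzσy⟩ := hz
    have h1 : σ z ≠ σ x := fun h => hzx (hσ.injOn hzS hx h)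
    have h2 : σ z ≠ y := fun h => hzσy (by rw [← h, (hσ z hzS).2.1])
    simp [Equiv.swap_apply_of_ne_of_ne, hzσx, hzy, h1, h2]
  have hsumA : ∀ g : α → M, ∑ z ∈ A, g z = g x + (g (σ x) + (g y + g (σ y))) := fun g => by
    rw [sum_insert (by simp [*, hσxx.symm, Ne.symm hyx, Ne.symm hσyx]),
      sum_insert (by simp [*, Ne.symm hyσx, Ne.symm hσyσx]), sum_insert (by simp [*, hσyy.symm]),
      sum_singleton]
  rw [← sum_sdiff hA, ← sum_sdiff hA (f := fun z => f z (σ z)), sum_congr rfl fun z hz =>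
    congrArg (f z) (hout z hz), hsumA, hsumA]
  simp [Equiv.swap_apply_of_ne_of_ne, *, hσxx.symm, hyx.symm]
  abel

lemma two_mul_card_image_le (hσ : IsPairing S σ) :
    2 * #(S.image fun x => s(x, σ x)) ≤ #S := by
  refine mul_card_image_le_card S 2 fun p hp => ?_
  obtain ⟨x, hx, rfl⟩ := mem_image.mp hp
  refine one_lt_card.mpr ⟨x, by simp [hx], σ x, ?_, (hσ x hx).2.2.symm⟩
  simp [(hσ x hx).1, (hσ x hx).2.1]

end IsPairing

namespace SimpleGraph

variable {V : Type*} {G : SimpleGraph V} {u v w x : V}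

lemma Connected.exists_adj_dist_add_one_eq (hG : G.Connected) (h : u ≠ v) :
    ∃ c, G.Adj u c ∧ G.dist c v + 1 = G.dist u v := by
  obtain ⟨p, -, hp⟩ := hG.exists_path_of_dist u v
  have hnil : ¬ p.Nil := fun hn => h hn.eq
  have hsnd := p.adj_snd hnil
  refine ⟨p.snd, hsnd, le_antisymm ?_ ?_⟩
  · have := dist_le p.tail
    rw [← p.length_tail_add_one hnil] at hp
    omega
  · have := hG.dist_triangle (u := u) (v := p.snd) (w := v)
    rw [dist_eq_one_iff_adj.mpr hsnd] at this
    omega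

lemma Connected.eq_or_eq_of_degree_eq_one [Fintype (G.neighborSet x)] (hG : G.Connected)
    (hx : G.degree x = 1) (h : G.dist u x + G.dist x v = G.dist u v) : x = u ∨ x = v := by
  by_contra! hne
  obtain ⟨c, hc, hcu⟩ := hG.exists_adj_dist_add_one_eq hne.1
  obtain ⟨d, hd, hdv⟩ := hG.exists_adj_dist_add_one_eq hne.2
  obtain rfl : c = d := (degree_eq_one_iff_existsUnique_adj.mp hx).unique hc hd
  have := hG.dist_triangle (u := u) (v := c) (w := v)
  rw [dist_comm (u := c), dist_comm (u := x)] at hcu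
  omega

namespace IsTree

variable (hT : G.IsTree)
include hT

noncomputable def path (u v : V) : G.Walk u v := (hT.existsUnique_path u v).exists.choose

lemma isPath_path : (hT.path u v).IsPath := (hT.existsUnique_path u v).exists.choose_spec

lemma eq_path {p : G.Walk u v} (hp : p.IsPath) : p = hT.path u v :=
  (hT.existsUnique_path u v).unique hp hT.isPath_path

lemma length_path : (hT.path u v).length = G.dist u v := by
  obtain ⟨p, hp, hl⟩ := hT.connected.exists_path_of_dist u v
  rw [← hT.eq_path hp, hl]

lemma dist_add_dist_eq_iff_mem_support_path :
    G.dist u x + G.dist x v = G.dist u v ↔ x ∈ (hT.path u v).support := by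
  constructor
  · intro h
    let q := (hT.path u x).append (hT.path x v)
    have hq : q.IsPath := q.isPath_of_length_eq_dist (by simp [q, length_path, h])
    rw [← hT.eq_path hq, Walk.mem_support_append_iff]
    exact Or.inl (Walk.end_mem_support _)
  · intro hx
    obtain ⟨q, r, hq, hr, he⟩ := hT.isPath_path.mem_support_iff_exists_append.mp hx
    have := congrArg Walk.length he
    rw [Walk.length_append, hT.eq_path hq, hT.eq_path hr] at this
    simpa only [length_path] using this.symm

/-- In terms of paths: `[u, w] ⊆ [u, v] ∪ [v, w]`. -/
lemma dist_add_dist_eq_or_dist_add_dist_eq (h : G.dist u x + G.dist x w = G.dist u w) (v : V) :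
    G.dist u x + G.dist x v = G.dist u v ∨ G.dist v x + G.dist x w = G.dist v w := by
  classical
  simp only [hT.dist_add_dist_eq_iff_mem_support_path] at h ⊢
  let q := (hT.path u v).append (hT.path v w)
  rw [← hT.eq_path q.bypass_isPath] at h
  exact (Walk.mem_support_append_iff _ _).mp (q.support_bypass_subset_support h)

variable [Fintype V] [DecidableRel G.Adj]

lemma exists_degree_eq_one_dist_add_dist_eq {c : V} (hc : G.Adj u c) :
    ∃ x, G.degree x = 1 ∧ G.dist u c + G.dist c x = G.dist u x := by
  classical
  simp only [hT.dist_add_dist_eq_iff_mem_support_path]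
  obtain ⟨x, hxS, hmax⟩ := (univ.filter fun x => c ∈ (hT.path u x).support).exists_max_image
    (G.dist u ·) ⟨c, by simp⟩
  simp only [mem_filter, mem_univ, true_and] at hxS hmax
  refine ⟨x, ?_, hxS⟩
  by_contra hdeg
  have hnil : ¬ (hT.path u x).Nil := by
    intro hn
    obtain rfl := hn.eq
    rw [Walk.nil_iff_support_eq.mp hn, List.mem_singleton] at hxS
    exact hc.ne hxS.symm
  have hpen := (hT.path u x).adj_penultimate hnil
  have hdeg2 : 1 < (G.neighborFinset x).card := by
    have := hpen.symm.degree_pos_left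
    rw [card_neighborFinset_eq_degree]
    omega
  obtain ⟨y, hy, hyne⟩ := exists_mem_ne hdeg2 (hT.path u x).penultimate
  rw [mem_neighborFinset] at hy
  have hyp : y ∉ (hT.path u x).support := fun hy' =>
    hyne (hT.isAcyclic.eq_penultimate_of_adj_end hT.isPath_path hy hy')
  have hq := hT.isPath_path.concat hyp hy
  have hlen := hmax y (by
    rw [← hT.eq_path hq]
    exact (hT.path u x).support_subset_support_concat hy hxS)
  rw [← hT.length_path, ← hT.length_path, ← hT.eq_path hq, Walk.length_concat] at hlen
  omega

lemma exists_degree_eq_one_dist_add_dist_eq_of_two_le_degree {z : V} (hz : 2 ≤ G.degree z) :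
    ∃ x y, G.degree x = 1 ∧ G.degree y = 1 ∧ G.dist x z + G.dist z y = G.dist x y := by
  obtain ⟨c, hc, d, hd, hcd⟩ := one_lt_card.mp (show 1 < (G.neighborFinset z).card by
    rw [card_neighborFinset_eq_degree]; omega)
  rw [mem_neighborFinset] at hc hd
  obtain ⟨x, hx, hcx⟩ := hT.exists_degree_eq_one_dist_add_dist_eq hc
  obtain ⟨y, hy, hdy⟩ := hT.exists_degree_eq_one_dist_add_dist_eq hd
  refine ⟨x, y, hx, hy, ?_⟩
  by_contra hxy
  have hzc : G.dist z c = 1 := dist_eq_one_iff_adj.mpr hc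
  have hzd : G.dist z d = 1 := dist_eq_one_iff_adj.mpr hd
  have hczd : G.dist c z + G.dist z d = G.dist c d := by
    rcases hT.dist_eq_dist_add_one_of_adj c hd with h | h
    · have := hT.connected.pos_dist_of_ne hcd
      rw [dist_comm, hzc] at h
      omega
    · rw [h, dist_comm, hzc, hzd]
  have := G.dist_comm (u := c) (v := z)
  have := G.dist_comm (u := d) (v := z)
  have := G.dist_comm (u := c) (v := x)
  have := G.dist_comm (u := d) (v := y)
  have := G.dist_comm (u := x) (v := z)
  have := G.dist_comm (u := y) (v := z)
  have := G.dist_comm (u := x) (v := d)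
  rcases hT.dist_add_dist_eq_or_dist_add_dist_eq hczd x with h | h
  · omega
  rcases hT.dist_add_dist_eq_or_dist_add_dist_eq h y with h' | h' <;> omega

variable [DecidableEq V] [Nontrivial V] {S : Finset V}

/-- The exchange step: two pairs lying in different branches at `z` are re-paired across `z`. -/
lemma exists_isPairing_sum_dist_lt (hleaf : ∀ x, G.degree x = 1 → x ∈ S) {σ : V → V}
    (hσ : IsPairing S σ) {z : V} (hz : ∀ x ∈ S, G.dist x z + G.dist z (σ x) ≠ G.dist x (σ x)) :
    ∃ σ', IsPairing S σ' ∧ ∑ x ∈ S, G.dist x (σ x) < ∑ x ∈ S, G.dist x (σ' x) := by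
  have hzS : z ∉ S := fun h => hz z h (by simp)
  have hdeg : 2 ≤ G.degree z := by
    have := hT.connected.preconnected.degree_pos_of_nontrivial z
    have := mt (hleaf z) hzS
    omega
  obtain ⟨x, y, hx, hy, hxzy⟩ := hT.exists_degree_eq_one_dist_add_dist_eq_of_two_le_degree hdeg
  have hxS := hleaf x hx
  have hyS := hleaf y hy
  have hx' := hz x hxS
  have hy' := hz y hyS
  have hσxzσy : G.dist (σ x) z + G.dist z (σ y) = G.dist (σ x) (σ y) := by
    rcases hT.dist_add_dist_eq_or_dist_add_dist_eq hxzy (σ x) with h | h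
    · exact absurd h hx'
    rcases hT.dist_add_dist_eq_or_dist_add_dist_eq h (σ y) with h' | h'
    · exact h'
    · rw [G.dist_comm (u := σ y), G.dist_comm (u := z) (v := y), G.dist_comm (u := σ y)] at h'
      exact absurd (by omega) hy'
  have hyx : y ≠ x := by
    rintro rfl
    have : G.dist y z = 0 := by simpa [G.dist_comm (u := z)] using hxzy
    exact hzS ((hT.connected.dist_eq_zero_iff.mp this) ▸ hyS)
  have hyσx : y ≠ σ x := by
    rintro rfl
    exact hx' hxzy
  refine ⟨_, hσ.conj_swap (hσ x hxS).1 hyS, ?_⟩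
  have hsum := hσ.sum_conj_swap G.dist hxS hyS hyx hyσx
  have := hT.connected.dist_triangle (u := x) (v := z) (w := σ x)
  have := hT.connected.dist_triangle (u := y) (v := z) (w := σ y)
  have := G.dist_comm (u := x) (v := σ x)
  have := G.dist_comm (u := y) (v := σ y)
  have := G.dist_comm (u := x) (v := y)
  have := G.dist_comm (u := σ x) (v := σ y)
  have := G.dist_comm (u := y) (v := z)
  have := G.dist_comm (u := σ x) (v := z)
  omega

theorem exists_isPairing_forall_dist_add_dist_eq (hleaf : ∀ x, G.degree x = 1 → x ∈ S)
    (hS : Even #S) :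
    ∃ σ, IsPairing S σ ∧ ∀ z, ∃ x ∈ S, G.dist x z + G.dist z (σ x) = G.dist x (σ x) := by
  classical
  obtain ⟨σ₀, hσ₀⟩ := exists_isPairing_of_even hS
  obtain ⟨σ, hσ, hmax⟩ := (univ.filter (IsPairing S)).exists_max_image
    (fun σ => ∑ x ∈ S, G.dist x (σ x)) ⟨σ₀, by simpa using hσ₀⟩
  simp only [mem_filter, mem_univ, true_and] at hσ hmax
  refine ⟨σ, hσ, fun z => ?_⟩
  by_contra! hz
  obtain ⟨σ', hσ', hlt⟩ := hT.exists_isPairing_sum_dist_lt hleaf hσ hz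
  exact (hmax σ' hσ').not_gt hlt

end IsTree

end SimpleGraph

namespace WGTree

variable (T : WGTree)

def leaves : Finset T.V := univ.filter fun v => T.G.degree v = 1

lemma colored_of_degree_eq_one {v : T.V} (hv : T.G.degree v = 1) (hr : v ≠ T.root) :
    T.Colored v := fun h => by
  have := T.uncolored_branching v h hr
  omega

lemma mem_of_mem_pathVerts_of_degree_eq_one {v : T.V} {p : Sym2 T.V} (hv : T.G.degree v = 1)
    (h : v ∈ T.pathVerts p) : v ∈ p := by
  obtain ⟨x, y, rfl, hxy⟩ := h
  rcases T.isTree.connected.eq_or_eq_of_degree_eq_one hv hxy with rfl | rfl <;> simp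

lemma pathCost_le_two (p : Sym2 T.V) : T.pathCost p ≤ 2 := by
  unfold pathCost
  split_ifs <;> omega

lemma card_filter_mem_le_pathCost {L : Finset T.V}
    (hL : {x | x ∈ L ∧ T.color x = WGColor.grey}.Subsingleton) (p : Sym2 T.V) :
    #(L.filter (· ∈ p)) ≤ T.pathCost p := by
  induction p using Sym2.ind with | _ u v => ?_
  unfold pathCost
  split_ifs with hdiag hgrey
  · obtain rfl : u = v := Sym2.mk_isDiag_iff.mp hdiag
    refine card_le_one.mpr fun x hx y hy => ?_
    simp only [mem_filter, Sym2.mem_iff, or_self] at hx hy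
    rw [hx.2, hy.2]
  · refine card_le_one.mpr fun x hx y hy => ?_
    rw [mem_filter] at hx hy
    exact hL ⟨hx.1, hgrey x hx.2⟩ ⟨hy.1, hgrey y hy.2⟩
  · refine (card_le_card (t := {u, v}) fun x hx => ?_).trans card_le_two
    simpa using (mem_filter.mp hx).2

lemma card_le_coverCost {L : Finset T.V} (hL : ∀ x ∈ L, T.G.degree x = 1 ∧ T.Colored x)
    (hgrey : {x | x ∈ L ∧ T.color x = WGColor.grey}.Subsingleton) {P : Finset (Sym2 T.V)}
    (hP : T.IsCoverOn Set.univ P) : #L ≤ T.coverCost P :=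
  calc #L ≤ #(P.biUnion fun p => L.filter (· ∈ p)) := card_le_card fun x hx => by
          obtain ⟨p, hp, hxp⟩ := hP.2.2 x trivial (hL x hx).2
          exact mem_biUnion.mpr ⟨p, hp, mem_filter.mpr
            ⟨hx, T.mem_of_mem_pathVerts_of_degree_eq_one (hL x hx).1 hxp⟩⟩
    _ ≤ ∑ p ∈ P, #(L.filter (· ∈ p)) := card_biUnion_le
    _ ≤ T.coverCost P := sum_le_sum fun p _ => T.card_filter_mem_le_pathCost hgrey p

lemma exists_isCoverOn_coverCost_le [Nontrivial T.V] (hroot : T.G.degree T.root ≠ 1)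
    (heven : Even #T.leaves) : ∃ P, T.IsCoverOn Set.univ P ∧ T.coverCost P ≤ #T.leaves := by
  obtain ⟨σ, hσ, hcov⟩ :=
    T.isTree.exists_isPairing_forall_dist_add_dist_eq (S := T.leaves) (by simp [leaves]) heven
  have hcol : ∀ x ∈ T.leaves, T.Colored x := fun x hx => by
    have hx : T.G.degree x = 1 := (mem_filter.mp hx).2
    exact T.colored_of_degree_eq_one hx (by rintro rfl; exact hroot hx)
  refine ⟨T.leaves.image fun x => s(x, σ x), ⟨fun _ _ _ _ => trivial, ?_, fun z _ _ => ?_⟩, ?_⟩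
  · simp only [mem_image]
    rintro _ ⟨x, hx, rfl⟩ y hy
    rcases Sym2.mem_iff.mp hy with rfl | rfl
    exacts [hcol _ hx, hcol _ (hσ x hx).1]
  · obtain ⟨x, hx, h⟩ := hcov z
    exact ⟨_, mem_image_of_mem _ hx, x, σ x, rfl, h⟩
  · calc T.coverCost _ ≤ ∑ _p ∈ T.leaves.image fun x => s(x, σ x), 2 :=
          sum_le_sum fun p _ => T.pathCost_le_two p
      _ = 2 * #(T.leaves.image fun x => s(x, σ x)) := by rw [sum_const, smul_eq_mul, mul_comm]
      _ ≤ #T.leaves := hσ.two_mul_card_image_le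

theorem cost_eq_card_leaves [Nontrivial T.V] (hroot : T.G.degree T.root ≠ 1)
    (hgrey : {v | T.isGreyLeaf v}.Subsingleton) (heven : Even #T.leaves) :
    T.cost = #T.leaves := by
  obtain ⟨P, hP, hPcost⟩ := T.exists_isCoverOn_coverCost_le hroot heven
  unfold cost costOn
  refine le_antisymm ((Nat.sInf_le (by exact ⟨P, hP, rfl⟩)).trans hPcost)
    (le_csInf ⟨_, P, hP, rfl⟩ ?_)
  rintro _ ⟨Q, hQ, rfl⟩
  have hleaf : ∀ x ∈ T.leaves, T.G.degree x = 1 := fun x hx => (mem_filter.mp hx).2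
  refine T.card_le_coverCost (fun x hx => ⟨hleaf x hx, ?_⟩)
    (fun x hx y hy => hgrey ⟨hx.2, hleaf x hx.1⟩ ⟨hy.2, hleaf y hy.1⟩) hQ
  exact T.colored_of_degree_eq_one (hleaf x hx) (by rintro rfl; exact hroot (hleaf _ hx))

section SpecialCase

variable {T} {a b : T.V} (hnbr : T.G.neighborSet T.root = {a, b}) (hb : T.Branching b)
include hnbr hb

lemma eq_or_white_of_degree_eq_one {v : T.V} (hv : T.G.degree v = 1) :
    v = a ∨ T.color v = WGColor.white := by
  by_cases h : T.G.Adj T.root v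
  · rw [← mem_neighborSet, hnbr] at h
    refine .inl (h.resolve_right ?_)
    rintro rfl
    unfold Branching at hb
    omega
  · exact .inr (T.leaf_white v hv h)

lemma isGreyLeaf_iff (ha : T.isGreyLeaf a) {v : T.V} : T.isGreyLeaf v ↔ v = a :=
  ⟨fun hv => (T.eq_or_white_of_degree_eq_one hnbr hb hv.2).resolve_right (by simp [hv.1]),
    by rintro rfl; exact ha⟩

lemma card_leaves (ha : T.isGreyLeaf a) : #T.leaves = T.whiteLeafCount + 1 := by
  have : T.leaves =
      insert a (univ.filter fun v => T.color v = WGColor.white ∧ T.G.degree v = 1) := by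
    ext v
    simp only [leaves, mem_filter, mem_univ, true_and, mem_insert]
    refine ⟨fun hv => (T.eq_or_white_of_degree_eq_one hnbr hb hv).imp_right (⟨·, hv⟩), ?_⟩
    rintro (rfl | ⟨-, hv⟩)
    exacts [ha.2, hv]
  rw [this, card_insert_of_notMem (by simp [ha.1]), whiteLeafCount]

end SpecialCase

end WGTree

theorem cost_special_case_general (T : WGTree) (w : ℕ) (hw : w = T.whiteLeafCount)
    (a b : T.V) (hab : a ≠ b)
    (hnbr : T.G.neighborSet T.root = {a, b})
    (ha : T.isGreyLeaf a) (hb : T.Branching b)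
    (hodd : Odd w) :
    T.greyLeafCount = 1 ∧ T.cost = w + 1 := by
  have hra : T.G.Adj T.root a := by simp [← mem_neighborSet, hnbr]
  have hrb : T.G.Adj T.root b := by simp [← mem_neighborSet, hnbr]
  have : Nontrivial T.V := ⟨T.root, a, hra.ne⟩
  have hroot : T.G.degree T.root ≠ 1 := fun h =>
    hab ((degree_eq_one_iff_existsUnique_adj.mp h).unique hra hrb)
  have hgrey : ∀ v, T.isGreyLeaf v ↔ v = a := fun v => T.isGreyLeaf_iff hnbr hb ha
  have hcard : #T.leaves = w + 1 := by rw [T.card_leaves hnbr hb ha, hw]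
  refine ⟨card_eq_one.mpr ⟨a, by ext; simp [hgrey]⟩, ?_⟩
  rw [T.cost_eq_card_leaves hroot (fun x hx y hy => ((hgrey x).1 hx).trans ((hgrey y).1 hy).symm)
    (hcard ▸ hodd.add_one), hcard]

/-- **Example (correction to Bergeron et al.).** Let `T` be a white–grey tree with `w`
white leaves whose root has exactly two neighbors, one a grey leaf (so `g = 1`) and the
other a branching vertex. If `w` is odd and no white leaf of `T` is short, then
`cost(T) = w + ⌈g/2⌉ = w + 1`. -/
theorem cost_special_case (T : WGTree) (w : ℕ) (hw : w = T.whiteLeafCount)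
    (a b : T.V) (hab : a ≠ b)
    (hnbr : T.G.neighborSet T.root = {a, b})
    (ha : T.isGreyLeaf a) (hb : T.Branching b)
    (hodd : Odd w)
    (hshort : ∀ v : T.V, T.G.degree v = 1 → T.color v = WGColor.white →
      ¬ ∃ u : T.V, T.G.Adj v u ∧ 3 ≤ T.G.degree u) :
    T.greyLeafCount = 1 ∧ T.cost = w + 1 :=
  cost_special_case_general T w hw a b hab hnbr ha hb hodd
end
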